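/- For λ > −1 and integer m ≥ 2, the function φ(t) = μ₀(t;λ,m) = ∫_{−∞}^{∞} |x|^{2λ+1} exp(t x² − x^{2m}) dx is infinitely differentiable on ℝ and satisfies the m-th order linear ordinary differential equation m φ^{(m)}(t) − t φ′(t) − (λ+1) φ(t) = 0 for all t ∈ ℝ. -/

import Mathlib

open MeasureTheory Real Set Filter

/-- The first moment `μ₀(t;λ,m)` of the generalised higher order Freud weight, as a
function of `t`. -/
noncomputable def freudFirstMoment (m : ℕ) (lam : ℝ) (t : ℝ) : ℝ :=
  ∫ x : ℝ, |x| ^ (2 * lam + 1) * Real.exp (t * x ^ 2 - x ^ (2 * m))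

lemma exp_arg_bound (c : ℝ) (m : ℕ) (hm : 2 ≤ m) {x : ℝ} (hx : 1 ≤ x) :
    c * x ^ 2 - x ^ (2 * m) ≤ (c + 1) ^ 2 / 2 - x := by
  have h4 : x ^ 4 ≤ x ^ (2 * m) := pow_le_pow_right₀ hx (by omega)
  nlinarith [sq_nonneg (c + 1 - x ^ 2)]

lemma rpow_le_exp_abs {a x : ℝ} (hx : 1 ≤ x) : x ^ a ≤ Real.exp (|a| * x) := by
  have hx0 : 0 < x := lt_of_lt_of_le one_pos hx
  rw [Real.rpow_def_of_pos hx0]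
  apply Real.exp_le_exp.mpr
  have hl0 : 0 ≤ Real.log x := Real.log_nonneg hx
  have hlx : Real.log x ≤ x := (Real.log_le_sub_one_of_pos hx0).trans (by linarith)
  calc Real.log x * a ≤ Real.log x * |a| :=
        mul_le_mul_of_nonneg_left (le_abs_self a) hl0
    _ ≤ x * |a| := mul_le_mul_of_nonneg_right hlx (abs_nonneg a)
    _ = |a| * x := mul_comm _ _

/-- key pointwise bound for `x ≥ 1`. -/
lemma pointwise_bound (a t : ℝ) (m : ℕ) (hm : 2 ≤ m) {x : ℝ} (hx : 1 ≤ x) :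
    x ^ a * Real.exp (t * x ^ 2 - x ^ (2 * m)) ≤
      Real.exp ((|a| + |t| + 1) ^ 2 / 2) * Real.exp (-x) := by
  have hx0 : (0:ℝ) < x := lt_of_lt_of_le one_pos hx
  have h1 : x ^ a * Real.exp (t * x ^ 2 - x ^ (2 * m)) ≤
      Real.exp (|a| * x + (t * x ^ 2 - x ^ (2 * m))) := by
    rw [Real.exp_add]
    exact mul_le_mul_of_nonneg_right (rpow_le_exp_abs hx) (Real.exp_pos _).le
  refine h1.trans ?_
  rw [← Real.exp_add]
  apply Real.exp_le_exp.mpr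
  have hb : (|a| + |t|) * x ^ 2 - x ^ (2 * m) ≤ (|a| + |t| + 1) ^ 2 / 2 - x :=
    exp_arg_bound _ m hm hx
  have h2 : |a| * x ≤ |a| * x ^ 2 := by
    apply mul_le_mul_of_nonneg_left _ (abs_nonneg a); nlinarith
  have h3 : t * x ^ 2 ≤ |t| * x ^ 2 := by
    apply mul_le_mul_of_nonneg_right (le_abs_self t); positivity
  nlinarith

lemma integrableOn_Ioi_master (a t : ℝ) (ha : -1 < a) (m : ℕ) (hm : 2 ≤ m) :
    IntegrableOn (fun x : ℝ => x ^ a * Real.exp (t * x ^ 2 - x ^ (2 * m))) (Ioi 0) := by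
  have hmeas : ∀ s : Set ℝ, AEStronglyMeasurable
      (fun x : ℝ => x ^ a * Real.exp (t * x ^ 2 - x ^ (2 * m))) (volume.restrict s) := by
    intro s
    apply Measurable.aestronglyMeasurable
    fun_prop
  have : Ioi (0:ℝ) = Ioc 0 1 ∪ Ioi 1 := (Ioc_union_Ioi_eq_Ioi zero_le_one).symm
  rw [this, integrableOn_union]
  constructor
  · -- on Ioc 0 1, bound by exp |t| * x ^ a
    have hint : IntegrableOn (fun x : ℝ => Real.exp |t| * x ^ a) (Ioc 0 1) :=
      (((intervalIntegral.intervalIntegrable_rpow' ha (a := 0) (b := 1)).def').mono_set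
        (by rw [uIoc_of_le zero_le_one])).const_mul _
    apply hint.mono' (hmeas _)
    filter_upwards [ae_restrict_mem measurableSet_Ioc] with x hx
    have hx0 : 0 < x := hx.1
    have harg : t * x ^ 2 - x ^ (2 * m) ≤ |t| := by
      have h1 : t * x ^ 2 ≤ |t| := by
        calc t * x ^ 2 ≤ |t| * x ^ 2 := mul_le_mul_of_nonneg_right (le_abs_self t) (by positivity)
          _ ≤ |t| * 1 := by
              apply mul_le_mul_of_nonneg_left _ (abs_nonneg t); nlinarith [hx.2, hx0.le]
          _ = |t| := mul_one _
      nlinarith [pow_pos hx0 (2 * m)]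
    rw [Real.norm_eq_abs, abs_mul, abs_of_nonneg (Real.rpow_nonneg hx0.le a),
      abs_of_nonneg (Real.exp_pos _).le, mul_comm]
    exact mul_le_mul_of_nonneg_right (Real.exp_le_exp.mpr harg) (Real.rpow_nonneg hx0.le a)
  · -- on Ioi 1
    have hint : IntegrableOn
        (fun x : ℝ => Real.exp ((|a| + |t| + 1) ^ 2 / 2) * Real.exp (-x)) (Ioi 1) := by
      have := exp_neg_integrableOn_Ioi (1:ℝ) (b := 1) one_pos
      have h2 := this.const_mul (Real.exp ((|a| + |t| + 1) ^ 2 / 2))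
      simp at h2
      exact h2
    apply hint.mono' (hmeas _)
    filter_upwards [ae_restrict_mem measurableSet_Ioi] with x hx
    have hx1 : (1:ℝ) ≤ x := le_of_lt hx
    have hx0 : (0:ℝ) < x := lt_of_lt_of_le one_pos hx1
    rw [Real.norm_eq_abs, abs_mul, abs_of_nonneg (Real.rpow_nonneg hx0.le a),
      abs_of_nonneg (Real.exp_pos _).le]
    exact pointwise_bound a t m hm hx1

lemma integrable_master (a t : ℝ) (ha : -1 < a) (m : ℕ) (hm : 2 ≤ m) :
    Integrable (fun x : ℝ => |x| ^ a * Real.exp (t * x ^ 2 - x ^ (2 * m))) := by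
  set f : ℝ → ℝ := fun x => |x| ^ a * Real.exp (t * x ^ 2 - x ^ (2 * m)) with hf
  have heven : ∀ x : ℝ, f (-x) = f x := by
    intro x
    simp only [hf, abs_neg, neg_sq]
    rw [pow_mul, pow_mul, neg_sq]
  have hIoi : IntegrableOn f (Ioi 0) := by
    apply (integrableOn_Ioi_master a t ha m hm).congr_fun _ measurableSet_Ioi
    intro x hx
    simp only [hf, abs_of_pos (mem_Ioi.mp hx)]
  have hIci : IntegrableOn f (Ici 0) := by
    rwa [integrableOn_Ici_iff_integrableOn_Ioi]
  have hIic : IntegrableOn f (Iic 0) := by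
    rw [← (Measure.measurePreserving_neg (volume : Measure ℝ)).integrableOn_comp_preimage
      (Homeomorph.neg ℝ).measurableEmbedding]
    simp only [Function.comp_def, heven, neg_preimage, neg_Iic, neg_zero]
    exact hIci
  rw [← integrableOn_univ, ← Iic_union_Ioi (a := (0:ℝ)), integrableOn_union]
  exact ⟨hIic, hIoi⟩

lemma integrable_weight (lam t : ℝ) (hlam : -1 < lam) (k m : ℕ) (hm : 2 ≤ m) :
    Integrable (fun x : ℝ =>
      |x| ^ (2 * lam + 1) * x ^ (2 * k) * Real.exp (t * x ^ 2 - x ^ (2 * m))) := by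
  have h0 : ∀ᵐ x : ℝ ∂volume, x ≠ 0 := by
    rw [ae_iff]
    simpa using measure_singleton (0:ℝ)
  apply (integrable_master (2 * lam + 1 + 2 * k) t
      (by have := Nat.cast_nonneg (α := ℝ) k; linarith) m hm).congr
  filter_upwards [h0] with x hx
  have habs : (0:ℝ) < |x| := abs_pos.mpr hx
  rw [Real.rpow_add habs]
  congr 1
  congr 1
  rw [show (2 * (k:ℝ)) = ((2 * k : ℕ) : ℝ) by push_cast; ring, Real.rpow_natCast,
    ← abs_pow, abs_of_nonneg ((even_two_mul k).pow_nonneg x)]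

noncomputable def gInt (m k : ℕ) (lam t : ℝ) : ℝ :=
  ∫ x : ℝ, |x| ^ (2 * lam + 1) * x ^ (2 * k) * Real.exp (t * x ^ 2 - x ^ (2 * m))

lemma shift_pow (c e x : ℝ) (k : ℕ) :
    c * x ^ (2 * k) * (e * x ^ 2) = c * x ^ (2 * (k + 1)) * e := by
  have h : 2 * (k + 1) = 2 * k + 2 := by ring
  rw [h, pow_add]; ring

lemma hasDerivAt_gInt (m k : ℕ) (hm : 2 ≤ m) (lam : ℝ) (hlam : -1 < lam) (t₀ : ℝ) :
    HasDerivAt (gInt m k lam) (gInt m (k + 1) lam t₀) t₀ := by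
  have key := hasDerivAt_integral_of_dominated_loc_of_deriv_le
    (F := fun (t : ℝ) (x : ℝ) =>
      |x| ^ (2 * lam + 1) * x ^ (2 * k) * Real.exp (t * x ^ 2 - x ^ (2 * m)))
    (F' := fun (t : ℝ) (x : ℝ) =>
      |x| ^ (2 * lam + 1) * x ^ (2 * k) * (Real.exp (t * x ^ 2 - x ^ (2 * m)) * x ^ 2))
    (x₀ := t₀) (s := Metric.ball t₀ 1)
    (bound := fun x : ℝ =>
      |x| ^ (2 * lam + 1) * x ^ (2 * (k + 1)) * Real.exp ((t₀ + 1) * x ^ 2 - x ^ (2 * m)))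
    (Metric.ball_mem_nhds t₀ one_pos)
    (Eventually.of_forall fun t => (by fun_prop :
      Measurable (fun x : ℝ =>
        |x| ^ (2 * lam + 1) * x ^ (2 * k) *
          Real.exp (t * x ^ 2 - x ^ (2 * m)))).aestronglyMeasurable)
    (integrable_weight lam t₀ hlam k m hm)
    ((by fun_prop : Measurable (fun x : ℝ =>
      |x| ^ (2 * lam + 1) * x ^ (2 * k) *
        (Real.exp (t₀ * x ^ 2 - x ^ (2 * m)) * x ^ 2))).aestronglyMeasurable)
    ?_ ?_ ?_
  · have heq : (fun x : ℝ =>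
        |x| ^ (2 * lam + 1) * x ^ (2 * k) * (Real.exp (t₀ * x ^ 2 - x ^ (2 * m)) * x ^ 2)) =
        fun x : ℝ =>
        |x| ^ (2 * lam + 1) * x ^ (2 * (k + 1)) * Real.exp (t₀ * x ^ 2 - x ^ (2 * m)) :=
      funext fun x => shift_pow _ _ _ _
    have h2 := key.2
    rw [heq] at h2
    exact h2
  · -- bound
    refine Eventually.of_forall fun x => fun t ht => ?_
    have hc : (0:ℝ) ≤ |x| ^ (2 * lam + 1) * x ^ (2 * k) :=
      mul_nonneg (Real.rpow_nonneg (abs_nonneg x) _) ((even_two_mul k).pow_nonneg x)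
    have ht' : t ≤ t₀ + 1 := by
      have := mem_ball_iff_norm.mp ht
      rw [Real.norm_eq_abs] at this
      linarith [le_abs_self (t - t₀)]
    rw [Real.norm_eq_abs, abs_mul, abs_of_nonneg hc, abs_mul,
      abs_of_nonneg (Real.exp_pos _).le, abs_of_nonneg (sq_nonneg x)]
    show _ ≤ |x| ^ (2 * lam + 1) * x ^ (2 * (k + 1)) * Real.exp ((t₀ + 1) * x ^ 2 - x ^ (2 * m))
    rw [← shift_pow]
    have hexp : Real.exp (t * x ^ 2 - x ^ (2 * m)) ≤
        Real.exp ((t₀ + 1) * x ^ 2 - x ^ (2 * m)) := by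
      apply Real.exp_le_exp.mpr
      have : t * x ^ 2 ≤ (t₀ + 1) * x ^ 2 :=
        mul_le_mul_of_nonneg_right ht' (sq_nonneg x)
      linarith
    have := mul_le_mul_of_nonneg_right hexp (sq_nonneg x)
    calc |x| ^ (2 * lam + 1) * x ^ (2 * k) * (Real.exp (t * x ^ 2 - x ^ (2 * m)) * x ^ 2)
        ≤ |x| ^ (2 * lam + 1) * x ^ (2 * k) *
          (Real.exp ((t₀ + 1) * x ^ 2 - x ^ (2 * m)) * x ^ 2) :=
          mul_le_mul_of_nonneg_left this hc
      _ = _ := rfl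
  · -- bound integrable
    have := integrable_weight lam (t₀ + 1) hlam (k + 1) m hm
    exact this
  · -- differentiability
    refine Eventually.of_forall fun x => fun t _ => ?_
    have h1 : HasDerivAt (fun t : ℝ => t * x ^ 2 - x ^ (2 * m)) (x ^ 2) t := by
      simpa using ((hasDerivAt_id t).mul_const (x ^ 2)).sub_const (x ^ (2 * m))
    exact h1.exp.const_mul _

noncomputable def gC (m : ℕ) (lam : ℝ) (z : ℂ) : ℂ :=
  ∫ x : ℝ, (|x| ^ (2 * lam + 1) : ℝ) *
    Complex.exp (z * (x:ℂ) ^ 2 - (x:ℂ) ^ (2 * m))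

lemma norm_integrand (lam : ℝ) (m : ℕ) (z : ℂ) (x : ℝ) :
    ‖(|x| ^ (2 * lam + 1) : ℝ) * Complex.exp (z * (x:ℂ) ^ 2 - (x:ℂ) ^ (2 * m))‖
      = |x| ^ (2 * lam + 1) * Real.exp (z.re * x ^ 2 - x ^ (2 * m)) := by
  rw [norm_mul, Complex.norm_exp, Complex.norm_real, Real.norm_eq_abs,
    abs_of_nonneg (Real.rpow_nonneg (abs_nonneg x) _)]
  congr 2
  simp [← Complex.ofReal_pow, Complex.sub_re, Complex.mul_re]

lemma integrable_gC_integrand (m : ℕ) (hm : 2 ≤ m) (lam : ℝ) (hlam : -1 < lam) (z : ℂ) :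
    Integrable (fun x : ℝ =>
      (|x| ^ (2 * lam + 1) : ℝ) * Complex.exp (z * (x:ℂ) ^ 2 - (x:ℂ) ^ (2 * m))) := by
  apply Integrable.mono' (integrable_master (2 * lam + 1) z.re (by linarith) m hm)
  · apply Measurable.aestronglyMeasurable
    fun_prop
  · filter_upwards with x
    rw [norm_integrand]
lemma differentiable_gC (m : ℕ) (hm : 2 ≤ m) (lam : ℝ) (hlam : -1 < lam) :
    Differentiable ℂ (gC m lam) := by
  intro z₀
  have key := hasDerivAt_integral_of_dominated_loc_of_deriv_le
    (F := fun (z : ℂ) (x : ℝ) =>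
      (|x| ^ (2 * lam + 1) : ℝ) * Complex.exp (z * (x:ℂ) ^ 2 - (x:ℂ) ^ (2 * m)))
    (F' := fun (z : ℂ) (x : ℝ) =>
      (|x| ^ (2 * lam + 1) : ℝ) *
        (Complex.exp (z * (x:ℂ) ^ 2 - (x:ℂ) ^ (2 * m)) * (x:ℂ) ^ 2))
    (x₀ := z₀) (s := Metric.ball z₀ 1)
    (bound := fun x : ℝ =>
      |x| ^ (2 * lam + 1) * x ^ 2 * Real.exp ((z₀.re + 1) * x ^ 2 - x ^ (2 * m)))
    (Metric.ball_mem_nhds z₀ one_pos)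
    (Eventually.of_forall fun z => (by fun_prop : Measurable (fun x : ℝ =>
      (|x| ^ (2 * lam + 1) : ℝ) *
        Complex.exp (z * (x:ℂ) ^ 2 - (x:ℂ) ^ (2 * m)))).aestronglyMeasurable)
    (integrable_gC_integrand m hm lam hlam z₀)
    ((by fun_prop : Measurable (fun x : ℝ =>
      (|x| ^ (2 * lam + 1) : ℝ) *
        (Complex.exp (z₀ * (x:ℂ) ^ 2 - (x:ℂ) ^ (2 * m)) * (x:ℂ) ^ 2))).aestronglyMeasurable)
    ?_ ?_ ?_
  · exact key.2.differentiableAt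
  · -- bound
    refine Eventually.of_forall fun x => fun z hz => ?_
    have hre : z.re ≤ z₀.re + 1 := by
      have h1 := Complex.abs_re_le_norm (z - z₀)
      have h2 := mem_ball_iff_norm.mp hz
      have := (abs_le.mp (h1.trans h2.le)).2
      simp only [Complex.sub_re] at this
      linarith
    rw [norm_mul, norm_mul, Complex.norm_exp]
    have h1 : ‖((|x| ^ (2 * lam + 1) : ℝ) : ℂ)‖ = |x| ^ (2 * lam + 1) := by
      rw [Complex.norm_real, Real.norm_eq_abs,
        abs_of_nonneg (Real.rpow_nonneg (abs_nonneg x) _)]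
    have h2 : ‖((x:ℂ)) ^ 2‖ = x ^ 2 := by
      rw [norm_pow, Complex.norm_real, Real.norm_eq_abs, sq_abs]
    rw [h1, h2]
    have h3 : (z * (x:ℂ) ^ 2 - (x:ℂ) ^ (2 * m)).re = z.re * x ^ 2 - x ^ (2 * m) := by
      simp [← Complex.ofReal_pow, Complex.sub_re, Complex.mul_re]
    rw [h3]
    have h4 : Real.exp (z.re * x ^ 2 - x ^ (2 * m)) ≤
        Real.exp ((z₀.re + 1) * x ^ 2 - x ^ (2 * m)) := by
      apply Real.exp_le_exp.mpr
      have := mul_le_mul_of_nonneg_right hre (sq_nonneg x)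
      linarith
    calc |x| ^ (2 * lam + 1) * (Real.exp (z.re * x ^ 2 - x ^ (2 * m)) * x ^ 2)
        ≤ |x| ^ (2 * lam + 1) * (Real.exp ((z₀.re + 1) * x ^ 2 - x ^ (2 * m)) * x ^ 2) := by
          apply mul_le_mul_of_nonneg_left _ (Real.rpow_nonneg (abs_nonneg x) _)
          exact mul_le_mul_of_nonneg_right h4 (sq_nonneg x)
      _ = |x| ^ (2 * lam + 1) * x ^ 2 * Real.exp ((z₀.re + 1) * x ^ 2 - x ^ (2 * m)) := by
          ring
  · -- bound integrable
    have h := integrable_master (2 * lam + 1 + 2) (z₀.re + 1) (by linarith) m hm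
    apply h.congr
    have h0 : ∀ᵐ x : ℝ ∂volume, x ≠ 0 := by
      rw [ae_iff]
      simpa using measure_singleton (0:ℝ)
    filter_upwards [h0] with x hx
    have habs : (0:ℝ) < |x| := abs_pos.mpr hx
    rw [Real.rpow_add habs]
    congr 1
    rw [show ((2:ℝ)) = ((2:ℕ) : ℝ) by norm_num, Real.rpow_natCast, ← abs_pow,
      abs_of_nonneg (sq_nonneg x)]
  · -- differentiability
    refine Eventually.of_forall fun x => fun z _ => ?_
    have h1 : HasDerivAt (fun z : ℂ => z * (x:ℂ) ^ 2 - (x:ℂ) ^ (2 * m)) ((x:ℂ) ^ 2) z := by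
      simpa using ((hasDerivAt_id z).mul_const ((x:ℂ) ^ 2)).sub_const ((x:ℂ) ^ (2 * m))
    exact h1.cexp.const_mul _


lemma byparts (m : ℕ) (hm : 2 ≤ m) (lam : ℝ) (hlam : -1 < lam) (t : ℝ) :
    (m : ℝ) * gInt m m lam t - t * gInt m 1 lam t - (lam + 1) * gInt m 0 lam t = 0 := by
  have hq0 : 0 < 2 * lam + 2 := by linarith
  set F : ℝ → ℝ := fun x => |x| ^ (2 * lam + 2) * Real.exp (t * x ^ 2 - x ^ (2 * m)) with hFdef
  set h : ℝ → ℝ := fun x =>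
    ((2 * lam + 2) + 2 * t * x ^ 2 - 2 * m * x ^ (2 * m)) *
      (|x| ^ (2 * lam + 1) * Real.exp (t * x ^ 2 - x ^ (2 * m))) with hhdef
  -- integrable pieces
  have w0 := integrable_weight lam t hlam 0 m hm
  have w1 := integrable_weight lam t hlam 1 m hm
  have wm := integrable_weight lam t hlam m m hm
  have heq : h = fun x =>
      (2 * lam + 2) * (|x| ^ (2 * lam + 1) * x ^ (2 * 0) * Real.exp (t * x ^ 2 - x ^ (2 * m)))
      + (2 * t) * (|x| ^ (2 * lam + 1) * x ^ (2 * 1) * Real.exp (t * x ^ 2 - x ^ (2 * m)))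
      - (2 * m) * (|x| ^ (2 * lam + 1) * x ^ (2 * m) * Real.exp (t * x ^ 2 - x ^ (2 * m))) := by
    funext x
    simp only [hhdef, Nat.mul_zero, pow_zero, mul_one, Nat.mul_one]
    ring
  have hint : Integrable h := by
    rw [heq]
    exact ((w0.const_mul _).add (w1.const_mul _)).sub (wm.const_mul _)
  -- derivative of F on Ioi 0
  have hderiv : ∀ x ∈ Ioi (0:ℝ), HasDerivAt F (h x) x := by
    intro x hx
    rw [mem_Ioi] at hx
    have hev : (fun y : ℝ => y ^ (2 * lam + 2) * Real.exp (t * y ^ 2 - y ^ (2 * m))) =ᶠ[nhds x] F := by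
      filter_upwards [Ioi_mem_nhds hx] with y hy
      simp only [hFdef, abs_of_pos (mem_Ioi.mp hy)]
    have h1 : HasDerivAt (fun y : ℝ => y ^ (2 * lam + 2)) ((2 * lam + 2) * x ^ ((2 * lam + 2) - 1)) x :=
      Real.hasDerivAt_rpow_const (Or.inl hx.ne')
    have h2 : HasDerivAt (fun y : ℝ => Real.exp (t * y ^ 2 - y ^ (2 * m)))
        (Real.exp (t * x ^ 2 - x ^ (2 * m)) *
          (t * ((2:ℕ) * x ^ (2 - 1)) - ((2 * m : ℕ) : ℝ) * x ^ (2 * m - 1))) x := by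
      exact (((hasDerivAt_pow 2 x).const_mul t).sub (hasDerivAt_pow (2 * m) x)).exp
    have h3 := h1.mul h2
    have h4 : HasDerivAt F
        ((2 * lam + 2) * x ^ ((2 * lam + 2) - 1) * Real.exp (t * x ^ 2 - x ^ (2 * m)) +
          x ^ (2 * lam + 2) * (Real.exp (t * x ^ 2 - x ^ (2 * m)) *
            (t * ((2:ℕ) * x ^ (2 - 1)) - ((2 * m : ℕ) : ℝ) * x ^ (2 * m - 1)))) x :=
      h3.congr_of_eventuallyEq hev.symm
    convert h4 using 1
    -- algebra
    have e1 : x ^ (2 * lam + 2) = x ^ (2 * lam + 1) * x := by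
      rw [show (2 * lam + 2) = (2 * lam + 1) + 1 by ring, Real.rpow_add hx, Real.rpow_one]
    have e2 : x ^ ((2 * lam + 2) - 1) = x ^ (2 * lam + 1) := by rw [show (2 * lam + 2) - 1 = 2 * lam + 1 by ring]
    have e3 : |x| ^ (2 * lam + 1) = x ^ (2 * lam + 1) := by rw [abs_of_pos hx]
    have huv : x * x ^ (2 * m - 1) = x ^ (2 * m) := by
      rw [← pow_succ']
      congr 1
      omega
    simp only [hhdef, e1, e2, e3]
    set E := Real.exp (t * x ^ 2 - x ^ (2 * m))
    set w := x ^ (2 * lam + 1) with hw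
    push_cast
    linear_combination (2 * (m:ℝ)) * w * E * huv
  -- continuity at 0
  have hcont : ContinuousWithinAt F (Ici 0) 0 := by
    apply ContinuousAt.continuousWithinAt
    apply ContinuousAt.mul
    · exact (Real.continuousAt_rpow_const _ _ (Or.inr hq0.le)).comp
        continuous_abs.continuousAt
    · exact (Real.continuous_exp.comp (by continuity)).continuousAt
  -- tendsto at top
  have htend : Tendsto F atTop (nhds 0) := by
    have hup : Tendsto (fun x : ℝ =>
        Real.exp ((|2 * lam + 2| + |t| + 1) ^ 2 / 2) * Real.exp (-x)) atTop (nhds 0) := by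
      have := tendsto_exp_neg_atTop_nhds_zero.const_mul
        (Real.exp ((|2 * lam + 2| + |t| + 1) ^ 2 / 2))
      simpa using this
    apply squeeze_zero' _ _ hup
    · filter_upwards with x
      exact mul_nonneg (Real.rpow_nonneg (abs_nonneg x) _) (Real.exp_pos _).le
    · filter_upwards [eventually_ge_atTop (1:ℝ)] with x hx
      have : F x = x ^ (2 * lam + 2) * Real.exp (t * x ^ 2 - x ^ (2 * m)) := by
        simp only [hFdef, abs_of_pos (lt_of_lt_of_le one_pos hx)]
      rw [this]
      exact pointwise_bound (2 * lam + 2) t m hm hx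
  have hF0 : F 0 = 0 := by
    simp only [hFdef, abs_zero]
    rw [Real.zero_rpow hq0.ne']
    ring
  have hIoi : ∫ x in Ioi (0:ℝ), h x = 0 := by
    rw [integral_Ioi_of_hasDerivAt_of_tendsto hcont hderiv hint.integrableOn htend, hF0,
      sub_zero]
  -- evenness
  have heven : ∀ x : ℝ, h (-x) = h x := by
    intro x
    simp only [hhdef, abs_neg, neg_sq]
    rw [pow_mul, neg_sq, ← pow_mul]
  have hIic : ∫ x in Iic (0:ℝ), h x = ∫ x in Ioi (0:ℝ), h x := by
    rw [← neg_zero, ← integral_comp_neg_Ioi]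
    simp only [heven, neg_zero]
  have htotal : ∫ x : ℝ, h x = 0 := by
    rw [← intervalIntegral.integral_Iic_add_Ioi hint.integrableOn hint.integrableOn, hIic, hIoi, add_zero]
  -- linearity
  have hlin : ∫ x : ℝ, h x =
      (2 * lam + 2) * gInt m 0 lam t + (2 * t) * gInt m 1 lam t - (2 * m) * gInt m m lam t := by
    simp only [heq]
    have H0 : Integrable (fun x : ℝ =>
        (2 * lam + 2) * (|x| ^ (2 * lam + 1) * x ^ (2 * 0) * Real.exp (t * x ^ 2 - x ^ (2 * m)))) :=
      w0.const_mul _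
    have H1 : Integrable (fun x : ℝ =>
        (2 * t) * (|x| ^ (2 * lam + 1) * x ^ (2 * 1) * Real.exp (t * x ^ 2 - x ^ (2 * m)))) :=
      w1.const_mul _
    have Hm : Integrable (fun x : ℝ =>
        (2 * (m:ℝ)) * (|x| ^ (2 * lam + 1) * x ^ (2 * m) * Real.exp (t * x ^ 2 - x ^ (2 * m)))) :=
      wm.const_mul _
    have H01 : Integrable (fun x : ℝ =>
        (2 * lam + 2) * (|x| ^ (2 * lam + 1) * x ^ (2 * 0) * Real.exp (t * x ^ 2 - x ^ (2 * m)))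
        + (2 * t) * (|x| ^ (2 * lam + 1) * x ^ (2 * 1) * Real.exp (t * x ^ 2 - x ^ (2 * m)))) :=
      H0.add H1
    rw [integral_sub H01 Hm, integral_add H0 H1,
      MeasureTheory.integral_const_mul, MeasureTheory.integral_const_mul, MeasureTheory.integral_const_mul]
    rfl
  rw [hlin] at htotal
  linarith

lemma gC_ofReal (m : ℕ) (lam : ℝ) (t : ℝ) :
    gC m lam (t : ℂ) = ((freudFirstMoment m lam t : ℝ) : ℂ) := by
  unfold gC freudFirstMoment
  have step : (∫ x : ℝ, (|x| ^ (2 * lam + 1) : ℝ) *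
      Complex.exp ((t:ℂ) * (x:ℂ) ^ 2 - (x:ℂ) ^ (2 * m))) =
      ∫ x : ℝ, ((|x| ^ (2 * lam + 1) * Real.exp (t * x ^ 2 - x ^ (2 * m)) : ℝ) : ℂ) := by
    congr 1
    funext x
    rw [Complex.ofReal_mul, Complex.ofReal_exp]
    push_cast
    ring_nf
  rw [step]
  exact integral_ofReal

lemma freud_eq_gInt (m : ℕ) (lam : ℝ) :
    freudFirstMoment m lam = gInt m 0 lam := by
  funext t
  simp [freudFirstMoment, gInt]

lemma deriv_gInt (m k : ℕ) (hm : 2 ≤ m) (lam : ℝ) (hlam : -1 < lam) :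
    deriv (gInt m k lam) = gInt m (k + 1) lam :=
  funext fun t => (hasDerivAt_gInt m k hm lam hlam t).deriv

lemma iteratedDeriv_gInt (m : ℕ) (hm : 2 ≤ m) (lam : ℝ) (hlam : -1 < lam) (n k : ℕ) :
    iteratedDeriv n (gInt m k lam) = gInt m (k + n) lam := by
  induction n generalizing k with
  | zero => simp
  | succ n ih =>
    rw [iteratedDeriv_succ', deriv_gInt m k hm lam hlam, ih (k + 1),
      show k + 1 + n = k + (n + 1) by omega]

/-- For `λ > −1` and integer `m ≥ 2`, the function
`φ(t) = μ₀(t;λ,m) = ∫_{−∞}^{∞} |x|^{2λ+1} exp(t x² − x^{2m}) dx` is infinitely differentiable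
on `ℝ` and satisfies `m φ^{(m)}(t) − t φ′(t) − (λ+1) φ(t) = 0` for all `t ∈ ℝ`. -/
theorem first_moment_ode (m : ℕ) (hm : 2 ≤ m) (lam : ℝ) (hlam : -1 < lam) :
    ContDiff ℝ (⊤ : ℕ∞) (freudFirstMoment m lam) ∧
    ∀ t : ℝ,
      (m : ℝ) * iteratedDeriv m (freudFirstMoment m lam) t
        - t * deriv (freudFirstMoment m lam) t
        - (lam + 1) * freudFirstMoment m lam t = 0 := by
  constructor
  · have hA : AnalyticOnNhd ℂ (gC m lam) univ :=
      Complex.analyticOnNhd_univ_iff_differentiable.mpr (differentiable_gC m hm lam hlam)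
    have hrepr : freudFirstMoment m lam = fun t : ℝ => (gC m lam (t : ℂ)).re := by
      funext t
      rw [gC_ofReal]
      simp
    rw [hrepr]
    apply AnalyticOnNhd.contDiff
    intro t _
    exact (Complex.reCLM.analyticAt _).comp
      (((hA _ (mem_univ _)).restrictScalars).comp (Complex.ofRealCLM.analyticAt t))
  · intro t
    rw [freud_eq_gInt, deriv_gInt m 0 hm lam hlam,
      iteratedDeriv_gInt m hm lam hlam m 0]
    simpa using byparts m hm lam hlam t
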